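/- arXiv:2009.05807 — 2 statements merged into one kernel-verified Lean document; each statement's English description precedes it below -/
import Mathlib

section
/- Let R be an associative unital ℂ-algebra containing elements x, y, z satisfying xy − yx = 2iħz, yz − zy = 2iħx, zx − xz = 2iħy (ħ ∈ ℂ), and a central invertible element μ commuting with x, y, z such that μ² = −4(x² + y² + z² + ħ²). Let M = xA + yB + zC in the 4×4 matrices over R, with A = [[0,1,0,0],[−1,0,0,0],[0,0,0,−1],[0,0,1,0]], B = [[0,0,1,0],[0,0,0,1],[−1,0,0,0],[0,−1,0,0]], C = [[0,0,0,1],[0,0,−1,0],[0,1,0,0],[−1,0,0,0]]. Then the matrix T(μ) := μ⁻¹(μ² − 4ħ²)·I − 4iħμ⁻¹·M satisfies T(μ)² = (μ² − 12ħ²)·I − 8iħM, i.e. T(μ)² equals T(μ²), so the multiplicative extension of the quantum partial derivatives to the central extension by μ is consistent. -/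
/-- The 4×4 matrix `A` (with entries in any ring `R`). -/
def matA (R : Type*) [Ring R] : Matrix (Fin 4) (Fin 4) R :=
  !![0, 1, 0, 0; -1, 0, 0, 0; 0, 0, 0, -1; 0, 0, 1, 0]

/-- The 4×4 matrix `B` (with entries in any ring `R`). -/
def matB (R : Type*) [Ring R] : Matrix (Fin 4) (Fin 4) R :=
  !![0, 0, 1, 0; 0, 0, 0, 1; -1, 0, 0, 0; 0, -1, 0, 0]

/-- The 4×4 matrix `C` (with entries in any ring `R`). -/
def matC (R : Type*) [Ring R] : Matrix (Fin 4) (Fin 4) R :=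
  !![0, 0, 0, 1; 0, 0, -1, 0; 0, 1, 0, 0; -1, 0, 0, 0]

/-!
`A, B, C` satisfy the quaternion relations (`A² = B² = C² = ABC = -1`), so the `su(2)_h` relations
give `M² = -Cas + 2iħ M`. Eliminating `Cas` from `μ² = -4(Cas + ħ²)` leaves
`μ² = 4M² - 8iħ M - 4ħ²`. Since `μ`, `μ⁻¹` and `M` commute pairwise, the claim is an identity in
the commutative subring they generate together with `ℂ`, where it follows from `μ⁻¹μ = 1` and
that relation.
-/

open Complex Matrix

section ScalarMatrix

variable {R n : Type*} [Ring R] [Fintype n]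

lemma Matrix.smul_mul_smul_of_commute (a b : R) {P Q : Matrix n n R}
    (hP : ∀ i j, Commute b (P i j)) : (a • P) * (b • Q) = (a * b) • (P * Q) := by
  ext i j
  simp only [mul_apply, smul_apply, smul_eq_mul, Finset.mul_sum]
  refine Finset.sum_congr rfl fun k _ => ?_
  rw [mul_assoc, ← mul_assoc (P i k), ← (hP i k).eq]
  simp only [mul_assoc]

variable [DecidableEq n]

lemma Matrix.smul_eq_scalar_mul (r : R) (P : Matrix n n R) : r • P = scalar n r * P := by
  rw [scalar_apply, smul_eq_diagonal_mul]

lemma Matrix.smul_one_eq_scalar (r : R) : r • (1 : Matrix n n R) = scalar n r := by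
  rw [smul_eq_scalar_mul, mul_one]

lemma Matrix.scalar_smul_one {K : Type*} [CommSemiring K] [Algebra K R] (c : K) :
    scalar n (c • (1 : R)) = c • 1 := by
  rw [← smul_one_eq_scalar, smul_assoc, one_smul]

end ScalarMatrix

section Quaternion

variable {R : Type*} [Ring R]

lemma matA_mul_matA : matA R * matA R = -1 := by
  ext i j; fin_cases i <;> fin_cases j <;> simp [matA]

lemma matB_mul_matB : matB R * matB R = -1 := by
  ext i j; fin_cases i <;> fin_cases j <;> simp [matB]

lemma matC_mul_matC : matC R * matC R = -1 := by
  ext i j; fin_cases i <;> fin_cases j <;> simp [matC]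

lemma matA_mul_matB : matA R * matB R = matC R := by
  ext i j; fin_cases i <;> fin_cases j <;> simp [matA, matB, matC]

lemma matB_mul_matA : matB R * matA R = -matC R := by
  ext i j; fin_cases i <;> fin_cases j <;> simp [matA, matB, matC]

lemma matB_mul_matC : matB R * matC R = matA R := by
  ext i j; fin_cases i <;> fin_cases j <;> simp [matA, matB, matC]

lemma matC_mul_matB : matC R * matB R = -matA R := by
  ext i j; fin_cases i <;> fin_cases j <;> simp [matA, matB, matC]

lemma matC_mul_matA : matC R * matA R = matB R := by
  ext i j; fin_cases i <;> fin_cases j <;> simp [matA, matB, matC]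

lemma matA_mul_matC : matA R * matC R = -matB R := by
  ext i j; fin_cases i <;> fin_cases j <;> simp [matA, matB, matC]

lemma commute_matA_apply (r : R) (i j : Fin 4) : Commute r (matA R i j) := by
  fin_cases i <;> fin_cases j <;> simp [matA]

lemma commute_matB_apply (r : R) (i j : Fin 4) : Commute r (matB R i j) := by
  fin_cases i <;> fin_cases j <;> simp [matB]

lemma commute_matC_apply (r : R) (i j : Fin 4) : Commute r (matC R i j) := by
  fin_cases i <;> fin_cases j <;> simp [matC]

end Quaternion

def matM {R : Type*} [Ring R] (x y z : R) : Matrix (Fin 4) (Fin 4) R :=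
  x • matA R + y • matB R + z • matC R

lemma matM_mul_self {K R : Type*} [CommRing K] [Ring R] [Algebra K R] (c : K) {x y z : R}
    (hxy : x * y - y * x = c • z) (hyz : y * z - z * y = c • x) (hzx : z * x - x * z = c • y) :
    matM x y z * matM x y z = -((x * x + y * y + z * z) • 1) + c • matM x y z := by
  simp only [matM, add_mul, mul_add, smul_mul_smul_of_commute _ _ (commute_matA_apply _),
    smul_mul_smul_of_commute _ _ (commute_matB_apply _),
    smul_mul_smul_of_commute _ _ (commute_matC_apply _),
    matA_mul_matA, matB_mul_matB, matC_mul_matC, matA_mul_matB, matB_mul_matA, matB_mul_matC,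
    matC_mul_matB, matC_mul_matA, matA_mul_matC, smul_add, ← smul_assoc, ← hxy, ← hyz, ← hzx,
    smul_neg, sub_smul, add_smul]
  abel

lemma T_sq_eq_of_mul_eq_one {S : Type*} [CommRing S] {i h M m ν : S} (hi : i ^ 2 = -1)
    (hν : ν * m = 1) (hm : m * m = 4 * (M * M) - 8 * i * h * M - 4 * h ^ 2) :
    (ν * (m * m - 4 * h ^ 2) - 4 * i * h * (ν * M)) ^ 2 = m * m - 12 * h ^ 2 - 8 * i * h * M := by
  linear_combination (4 * ν ^ 2 * h ^ 2) * hm + (16 * ν ^ 2 * h ^ 2 * M ^ 2) * hi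
    + ((ν * m + 1) * (m * m - 12 * h ^ 2 - 8 * i * h * M)) * hν

open scoped IsMulCommutative in
lemma T_sq_eq_of_commute {S : Type*} [Ring S] [Algebra ℂ S] (ħ : ℂ) {M m ν : S}
    (hMm : Commute M m) (hMν : Commute M ν) (hmν : Commute m ν) (hν : ν * m = 1)
    (hm : m * m = (4 : ℂ) • (M * M) - (8 * I * ħ) • M - (4 * ħ ^ 2) • 1) :
    (ν * (m * m - (4 * ħ ^ 2) • 1) - (4 * I * ħ) • (ν * M)) ^ 2
      = m * m - (12 * ħ ^ 2) • 1 - (8 * I * ħ) • M := by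
  set i := algebraMap ℂ S I
  set h := algebraMap ℂ S ħ
  have hcomm : ∀ a ∈ ({i, h, M, m, ν} : Set S), ∀ b ∈ ({i, h, M, m, ν} : Set S), Commute a b := by
    simp only [Set.mem_insert_iff, Set.mem_singleton_iff]
    rintro a (rfl | rfl | rfl | rfl | rfl) b (rfl | rfl | rfl | rfl | rfl) <;>
      first
        | exact Commute.refl _
        | exact Algebra.commutes _ _
        | exact (Algebra.commutes _ _).symm
        | assumption
        | exact Commute.symm ‹_›
  have := Subring.isMulCommutative_closure hcomm
  let lift : ∀ a ∈ ({i, h, M, m, ν} : Set S), Subring.closure ({i, h, M, m, ν} : Set S) :=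
    fun a ha => ⟨a, Subring.subset_closure ha⟩
  have hinj := (Subring.closure ({i, h, M, m, ν} : Set S)).subtype_injective
  have key := T_sq_eq_of_mul_eq_one (i := lift i (by simp)) (h := lift h (by simp))
    (M := lift M (by simp)) (m := lift m (by simp)) (ν := lift ν (by simp)) ?_ ?_ ?_
  · replace key := congrArg (Subring.closure _).subtype key
    simp only [map_mul, map_sub, map_pow, map_ofNat, Subring.subtype_apply, lift] at key
    simpa only [Algebra.smul_def, map_mul, map_pow, map_ofNat, mul_one] using key
  all_goals apply hinj
  all_goals simp only [map_mul, map_sub, map_pow, map_ofNat, map_neg, map_one,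
    Subring.subtype_apply, lift]
  · rw [← map_pow, I_sq, map_neg, map_one]
  · exact hν
  · simpa only [Algebra.smul_def, map_mul, map_pow, map_ofNat, mul_one] using hm

/-- with `x, y, z` satisfying the `su(2)_h` relations (`ħ = hb`) and `μ` a
central invertible element with `μ² = −4(x² + y² + z² + ħ²)`, the matrix
`T(μ) = μ⁻¹(μ² − 4ħ²)I − 4iħμ⁻¹M` satisfies `T(μ)² = (μ² − 12ħ²)I − 8iħM = T(μ²)`. -/
theorem T_mu_square_consistency
    {R : Type*} [Ring R] [Algebra ℂ R] (hb : ℂ) (x y z μ μinv : R)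
    (hxy : x * y - y * x = (2 * Complex.I * hb) • z)
    (hyz : y * z - z * y = (2 * Complex.I * hb) • x)
    (hzx : z * x - x * z = (2 * Complex.I * hb) • y)
    (hcentral : ∀ r : R, μ * r = r * μ)
    (hinv₁ : μ * μinv = 1) (hinv₂ : μinv * μ = 1)
    (hμsq : μ * μ = (-4 : ℂ) • (x * x + y * y + z * z + (hb ^ 2) • (1 : R))) :
    let M : Matrix (Fin 4) (Fin 4) R := x • matA R + y • matB R + z • matC R
    let Tμ : Matrix (Fin 4) (Fin 4) R :=
      (μinv * (μ * μ - (4 * hb ^ 2) • (1 : R))) • (1 : Matrix (Fin 4) (Fin 4) R)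
        - (4 * Complex.I * hb) • (μinv • M)
    Tμ ^ 2 = (μ * μ - (12 * hb ^ 2) • (1 : R)) • (1 : Matrix (Fin 4) (Fin 4) R)
        - (8 * Complex.I * hb) • M := by
  intro M
  have hμinv : ∀ r : R, Commute μinv r := fun r =>
    Commute.units_inv_left (u := ⟨μ, μinv, hinv₁, hinv₂⟩) (hcentral r)
  have hM : M * M = -((x * x + y * y + z * z) • 1) + (2 * I * hb) • M :=
    matM_mul_self _ hxy hyz hzx
  have hm : scalar (Fin 4) μ * scalar (Fin 4) μ
      = (4 : ℂ) • (M * M) - (8 * I * hb) • M - (4 * hb ^ 2) • 1 := by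
    rw [← map_mul, ← smul_one_eq_scalar, hμsq, hM, smul_assoc, add_smul, smul_assoc, one_smul]
    generalize (x * x + y * y + z * z) • (1 : Matrix (Fin 4) (Fin 4) R) = K
    clear_value M
    module
  dsimp only
  rw [smul_one_eq_scalar, smul_one_eq_scalar, map_mul, map_sub, map_sub, map_mul,
    scalar_smul_one, scalar_smul_one, smul_eq_scalar_mul μinv M]
  exact T_sq_eq_of_commute hb (scalar_commute _ hcentral M).symm
    (scalar_commute _ hμinv M).symm (scalar_commute _ hcentral _)
    (by rw [← map_mul, hinv₂, map_one]) hm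
end

section
/- Let R be an associative unital ℂ-algebra containing elements x, y, z satisfying xy − yx = 2iħz, yz − zy = 2iħx, zx − xz = 2iħy (ħ ∈ ℂ), and a central element μ commuting with x, y, z such that μ² = −4(x² + y² + z² + ħ²). Let M = xA + yB + zC with A, B, C the 4×4 matrices A = [[0,1,0,0],[−1,0,0,0],[0,0,0,−1],[0,0,1,0]], B = [[0,0,1,0],[0,0,0,1],[−1,0,0,0],[0,−1,0,0]], C = [[0,0,0,1],[0,0,−1,0],[0,1,0,0],[−1,0,0,0]], and set S = (μ² − 12ħ²)·I − 8iħM. Then (S − (μ − 2iħ)²·I)(S − (μ + 2iħ)²·I) = 0, i.e. the matrix T(μ²) = S has eigenvalues ν₁ = (μ − 2iħ)² and ν₂ = (μ + 2iħ)². -/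
/-! The matrices `A, B, C` multiply like the quaternion units `i, j, k` and commute with the
scalar matrices `x I, y I, z I`, so the `su(2)` relations give `M² = κ M − (x² + y² + z²)` with
`κ = 2iħ`; together with `μ² = −4(x² + y² + z² + ħ²)` and `κ² = −4ħ²` this reads
`4M² = 4κ M + μ² − κ²`. Since `S − (μ ∓ κ)² = 2κ(κ ± μ − 2M)` and `μ` is central, the product
is `4κ²((2M − κ)² − μ²) = 0`. -/

open Matrix

structure IsQuaternionTriple {𝔸 : Type*} [Ring 𝔸] (i j k : 𝔸) : Prop where
  i_mul_i : i * i = -1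
  j_mul_j : j * j = -1
  k_mul_k : k * k = -1
  i_mul_j : i * j = k
  j_mul_i : j * i = -k
  j_mul_k : j * k = i
  k_mul_j : k * j = -i
  k_mul_i : k * i = j
  i_mul_k : i * k = -j

theorem IsQuaternionTriple.sq_mul_add_mul_add_mul {𝔸 : Type*} [Ring 𝔸] {i j k x y z : 𝔸}
    (h : IsQuaternionTriple i j k) (hx : x ∈ Set.centralizer {i, j, k})
    (hy : y ∈ Set.centralizer {i, j, k}) (hz : z ∈ Set.centralizer {i, j, k}) :
    (x * i + y * j + z * k) ^ 2 =
      (y * z - z * y) * i + (z * x - x * z) * j + (x * y - y * x) * k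
        - (x ^ 2 + y ^ 2 + z ^ 2) := by
  simp only [Set.mem_centralizer_iff, Set.mem_insert_iff, Set.mem_singleton_iff,
    forall_eq_or_imp, forall_eq] at hx hy hz
  obtain ⟨hxi, hxj, hxk⟩ := hx
  obtain ⟨hyi, hyj, hyk⟩ := hy
  obtain ⟨hzi, hzj, hzk⟩ := hz
  simp only [sq, add_mul, mul_add, mul_assoc, ← mul_assoc i, ← mul_assoc j, ← mul_assoc k,
    hxi, hxj, hxk, hyi, hyj, hyk, hzi, hzj, hzk]
  simp only [mul_assoc, h.i_mul_i, h.j_mul_j, h.k_mul_k, h.i_mul_j, h.j_mul_i, h.j_mul_k,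
    h.k_mul_j, h.k_mul_i, h.i_mul_k, sub_mul, mul_neg, mul_one]
  abel

open scoped IsMulCommutative in
/-- `m` and `M` generate a commutative subalgebra, in which the identity is a polynomial
consequence of the relation. -/
theorem Commute.sub_sq_mul_sub_sq_eq_zero {𝕜 𝔸 : Type*} [CommRing 𝕜] [Ring 𝔸] [Algebra 𝕜 𝔸]
    {m M : 𝔸} (hmM : Commute m M) (κ : 𝕜) (hM : 4 • M ^ 2 = (4 * κ) • M + m ^ 2 - κ ^ 2 • 1) :
    (m ^ 2 + (3 * κ ^ 2) • 1 - (4 * κ) • M - (m - κ • 1) ^ 2) *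
      (m ^ 2 + (3 * κ ^ 2) • 1 - (4 * κ) • M - (m + κ • 1) ^ 2) = 0 := by
  have hcomm : ∀ a ∈ ({m, M} : Set 𝔸), ∀ b ∈ ({m, M} : Set 𝔸), a * b = b * a := by
    rintro a (rfl | rfl) b (rfl | rfl) <;> simp [hmM.eq]
  have := Algebra.isMulCommutative_adjoin 𝕜 hcomm
  let m' : Algebra.adjoin 𝕜 {m, M} := ⟨m, Algebra.subset_adjoin (by simp)⟩
  let M' : Algebra.adjoin 𝕜 {m, M} := ⟨M, Algebra.subset_adjoin (by simp)⟩
  have hM' : 4 • M' ^ 2 = (4 * κ) • M' + m' ^ 2 - κ ^ 2 • 1 := Subtype.ext hM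
  have key : (m' ^ 2 + (3 * κ ^ 2) • 1 - (4 * κ) • M' - (m' - κ • 1) ^ 2) *
      (m' ^ 2 + (3 * κ ^ 2) • 1 - (4 * κ) • M' - (m' + κ • 1) ^ 2) = 0 := by
    simp only [Algebra.smul_def, map_mul, map_pow, map_ofNat] at hM' ⊢
    linear_combination (4 * algebraMap 𝕜 _ κ ^ 2) * hM'
  exact congrArg Subtype.val key

theorem Matrix.scalar_smul {𝕜 R n : Type*} [Ring R] [DecidableEq n] [Fintype n]
    [SMulZeroClass 𝕜 R] (c : 𝕜) (r : R) : scalar n (c • r) = c • scalar n r :=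
  diagonal_smul c fun _ => r

section

variable {R : Type*} [Ring R]

theorem isQuaternionTriple_matA_matB_matC : IsQuaternionTriple (matA R) (matB R) (matC R) := by
  constructor <;> ext i j <;> fin_cases i <;> fin_cases j <;>
    simp [matA, matB, matC, Matrix.mul_apply, Fin.sum_univ_four]

theorem scalar_mem_centralizer_matA_matB_matC (r : R) :
    scalar (Fin 4) r ∈ Set.centralizer {matA R, matB R, matC R} := by
  rintro P (rfl | rfl | rfl) <;> refine (scalar_commute_iff.2 ?_).symm.eq <;>
    ext i j <;> fin_cases i <;> fin_cases j <;> simp [matA, matB, matC]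

theorem sq_smul_matA_add_smul_matB_add_smul_matC (x y z : R) :
    (x • matA R + y • matB R + z • matC R) ^ 2 =
      (y * z - z * y) • matA R + (z * x - x * z) • matB R + (x * y - y * x) • matC R
        - (x ^ 2 + y ^ 2 + z ^ 2) • 1 := by
  simp only [smul_eq_diagonal_mul, ← scalar_apply, mul_one]
  rw [isQuaternionTriple_matA_matB_matC.sq_mul_add_mul_add_mul
    (scalar_mem_centralizer_matA_matB_matC x) (scalar_mem_centralizer_matA_matB_matC y)
    (scalar_mem_centralizer_matA_matB_matC z)]
  simp only [map_sub, map_mul, map_add, map_pow]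

end

/-- with `x, y, z` satisfying the `su(2)_h` relations (`ħ = hb`) and `μ`
central with `μ² = −4(x² + y² + z² + ħ²)`, the matrix `S = T(μ²) = (μ² − 12ħ²)I − 8iħM`
satisfies `(S − (μ − 2iħ)²I)(S − (μ + 2iħ)²I) = 0`, i.e. `S` has eigenvalues
`ν₁ = (μ − 2iħ)²` and `ν₂ = (μ + 2iħ)²`. -/
theorem T_mu_squared_eigenvalues
    {R : Type*} [Ring R] [Algebra ℂ R] (hb : ℂ) (x y z μ : R)
    (hxy : x * y - y * x = (2 * Complex.I * hb) • z)
    (hyz : y * z - z * y = (2 * Complex.I * hb) • x)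
    (hzx : z * x - x * z = (2 * Complex.I * hb) • y)
    (hcentral : ∀ r : R, μ * r = r * μ)
    (hμsq : μ * μ = (-4 : ℂ) • (x * x + y * y + z * z + (hb ^ 2) • (1 : R))) :
    let c : R := (2 * Complex.I * hb) • (1 : R)
    let M : Matrix (Fin 4) (Fin 4) R := x • matA R + y • matB R + z • matC R
    let S : Matrix (Fin 4) (Fin 4) R :=
      (μ * μ - (12 * hb ^ 2) • (1 : R)) • (1 : Matrix (Fin 4) (Fin 4) R)
        - (8 * Complex.I * hb) • M
    (S - ((μ - c) ^ 2) • (1 : Matrix (Fin 4) (Fin 4) R))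
        * (S - ((μ + c) ^ 2) • (1 : Matrix (Fin 4) (Fin 4) R)) = 0 := by
  intro c M S
  set κ := 2 * Complex.I * hb
  have hκ : κ ^ 2 = -4 * hb ^ 2 := by linear_combination (4 * hb ^ 2) * Complex.I_sq
  have hc : scalar (Fin 4) c = κ • 1 := by rw [scalar_smul, map_one]
  have hMsq : M ^ 2 = κ • M - scalar (Fin 4) (x ^ 2 + y ^ 2 + z ^ 2) := by
    rw [sq_smul_matA_add_smul_matB_add_smul_matC, hxy, hyz, hzx, smul_one_eq_diagonal]
    simp only [M, smul_assoc, smul_add, scalar_apply]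
  have hS : S = scalar (Fin 4) μ ^ 2 - (12 * hb ^ 2) • 1 - (4 * κ) • M := by
    rw [show 4 * κ = 8 * Complex.I * hb by ring]
    simp only [S, smul_one_eq_diagonal, ← scalar_apply, map_sub, map_mul, scalar_smul, map_one, sq]
  simp only [smul_one_eq_diagonal, ← scalar_apply, map_pow, map_sub, map_add, hc]
  clear_value κ c M S
  have hrel : 4 • M ^ 2 = (4 * κ) • M + scalar (Fin 4) μ ^ 2 - κ ^ 2 • 1 := by
    rw [hMsq, ← map_pow, sq μ, hμsq, hκ]
    simp only [scalar_smul, map_add, map_one, map_mul, sq]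
    module
  have hS' : S = scalar (Fin 4) μ ^ 2 + (3 * κ ^ 2) • 1 - (4 * κ) • M := by
    rw [hS, hκ]
    module
  rw [hS']
  exact (scalar_commute μ hcentral M).sub_sq_mul_sub_sq_eq_zero κ hrel
end
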